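/- arXiv:1611.01605 — 4 statements merged into one kernel-verified Lean document; each statement's English description precedes it below -/
import Mathlib

section
/- Let (M,d) be a complete metric space, C a non-empty closed subset of M, and {x_n} a sequence Fejér monotone with respect to C. If there exists β ∈ [0,1) such that d(x_{n+1}, C) ≤ β d(x_n, C) for every n, then {x_n} converges linearly to some point x ∈ C; that is, there exist K ≥ 0 and α ∈ [0,1) such that d(x_n, x) ≤ K α^n for all n. -/
/-!
Fejér monotonicity gives `d(xₙ, xₘ) ≤ d(xₙ, z) + d(xₘ, z) ≤ 2 d(xₙ, z)` for every `z ∈ C` and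
`n ≤ m`, hence `d(xₙ, xₘ) ≤ 2 d(xₙ, C)`. Once `d(xₙ, C) → 0` the sequence is therefore Cauchy, its
limit `p` lies in the closed set `C`, and `d(xₙ, p) ≤ 2 d(xₙ, C) ≤ 2 βⁿ d(x₀, C)`.
-/

open Filter Topology Metric

def FejerMonotone {M : Type*} [MetricSpace M] (C : Set M) (x : ℕ → M) : Prop :=
  ∀ z ∈ C, ∀ n : ℕ, dist (x (n + 1)) z ≤ dist (x n) z

namespace FejerMonotone

variable {M : Type*} [MetricSpace M] {C : Set M} {x : ℕ → M}

theorem antitone_dist (hx : FejerMonotone C x) {z : M} (hz : z ∈ C) :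
    Antitone fun n => dist (x n) z :=
  antitone_nat_of_succ_le (hx z hz)

theorem dist_le_two_mul_infDist (hx : FejerMonotone C x) (hC : C.Nonempty) {n m : ℕ}
    (hnm : n ≤ m) : dist (x n) (x m) ≤ 2 * infDist (x n) C := by
  suffices dist (x n) (x m) / 2 ≤ infDist (x n) C by linarith
  refine (le_infDist hC).2 fun z hz => ?_
  have := hx.antitone_dist hz hnm
  linarith [dist_triangle_right (x n) (x m) z]

theorem dist_le_two_mul_infDist_of_tendsto (hx : FejerMonotone C x) (hC : C.Nonempty) {p : M}
    (hp : Tendsto x atTop (𝓝 p)) (n : ℕ) : dist (x n) p ≤ 2 * infDist (x n) C :=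
  le_of_tendsto (tendsto_const_nhds.dist hp) <|
    (eventually_ge_atTop n).mono fun _ hm => hx.dist_le_two_mul_infDist hC hm

theorem cauchySeq (hx : FejerMonotone C x) (hC : C.Nonempty)
    (hd : Tendsto (fun n => infDist (x n) C) atTop (𝓝 0)) : CauchySeq x := by
  refine Metric.cauchySeq_iff'.2 fun ε hε => ?_
  obtain ⟨N, hN⟩ := (hd.eventually (gt_mem_nhds (half_pos hε))).exists_forall_of_atTop
  refine ⟨N, fun n hn => ?_⟩
  rw [dist_comm]
  linarith [hx.dist_le_two_mul_infDist hC hn, hN N le_rfl]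

theorem exists_tendsto_mem [CompleteSpace M] (hx : FejerMonotone C x) (hC : C.Nonempty)
    (hCclosed : IsClosed C) (hd : Tendsto (fun n => infDist (x n) C) atTop (𝓝 0)) :
    ∃ p ∈ C, Tendsto x atTop (𝓝 p) := by
  obtain ⟨p, hp⟩ := cauchySeq_tendsto_of_complete (hx.cauchySeq hC hd)
  have hpd : infDist p C = 0 :=
    tendsto_nhds_unique (((continuous_infDist_pt C).tendsto p).comp hp) hd
  exact ⟨p, (hCclosed.mem_iff_infDist_zero hC).2 hpd, hp⟩

end FejerMonotone

theorem fejer_monotone_linear_convergence {M : Type*} [MetricSpace M] [CompleteSpace M]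
    (C : Set M) (hC : C.Nonempty) (hCclosed : IsClosed C) (x : ℕ → M)
    (hFejer : ∀ z ∈ C, ∀ n : ℕ, dist (x (n + 1)) z ≤ dist (x n) z)
    (β : ℝ) (hβ0 : 0 ≤ β) (hβ1 : β < 1)
    (hrate : ∀ n : ℕ, Metric.infDist (x (n + 1)) C ≤ β * Metric.infDist (x n) C) :
    ∃ p ∈ C, ∃ K : ℝ, 0 ≤ K ∧ ∃ α : ℝ, 0 ≤ α ∧ α < 1 ∧
      (∀ n : ℕ, dist (x n) p ≤ K * α ^ n) ∧ Filter.Tendsto x Filter.atTop (nhds p) := by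
  have hfejer : FejerMonotone C x := hFejer
  set d₀ := infDist (x 0) C
  have hdecay (n : ℕ) : infDist (x n) C ≤ β ^ n * d₀ := le_geom (u := fun n => infDist (x n) C) hβ0 n fun k _ => hrate k
  have hd : Tendsto (fun n => infDist (x n) C) atTop (𝓝 0) := by
    refine squeeze_zero (fun _ => infDist_nonneg) hdecay ?_
    simpa using (tendsto_pow_atTop_nhds_zero_of_lt_one hβ0 hβ1).mul_const d₀
  obtain ⟨p, hpC, hp⟩ := hfejer.exists_tendsto_mem hC hCclosed hd
  refine ⟨p, hpC, 2 * d₀, mul_nonneg zero_le_two infDist_nonneg, β, hβ0, hβ1, fun n => ?_, hp⟩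
  calc dist (x n) p ≤ 2 * infDist (x n) C := hfejer.dist_le_two_mul_infDist_of_tendsto hC hp n
    _ ≤ 2 * d₀ * β ^ n := by linarith [hdecay n]
end

section
/- Under the hypotheses of the maximum inequality (alternating projections x_{2n-1} = P_A(x_{2n-2}), x_{2n} = P_B(x_{2n-1}) between closed sets A, B with A ∩ B ≠ ∅, with projection maps satisfying d(z, P_C(x))² + c·d(x, P_C(x))² ≤ d(x,z)² for c ∈ (0,1)), one has max{d(x_n, A), d(x_n, B)} → 0 as n → ∞. -/
/-!
Every projection step toward `A` or `B` is a step toward `A ∩ B`: taking `z ∈ A ∩ B` in the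
projection inequality and minimising over `z` gives
`d(x_{n+1}, A ∩ B)² + c · d(x_n, C)² ≤ d(x_n, A ∩ B)²`, where `C` is the set projected onto.
Since `x_n` already lies in the other set, `d(x_n, C)` is the maximum of the two distances.
The squared distances to `A ∩ B` thus decrease and converge, so their successive differences,
which dominate `c · max{d(x_n, A), d(x_n, B)}²`, tend to zero.
-/

open Metric Set Filter Topology

theorem tendsto_zero_of_le_sub_succ {a b : ℕ → ℝ} (hb : ∀ n, 0 ≤ b n)
    (ha : BddBelow (range a)) (h : ∀ n, b n ≤ a n - a (n + 1)) :
    Tendsto b atTop (𝓝 0) := by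
  have hanti : Antitone a := antitone_nat_of_succ_le fun n => by linarith [hb n, h n]
  have hlim := tendsto_atTop_ciInf hanti ha
  have hdiff : Tendsto (fun n => a n - a (n + 1)) atTop (𝓝 0) := by
    simpa using hlim.sub (hlim.comp (tendsto_add_atTop_nat 1))
  exact squeeze_zero hb h hdiff

section Projection

variable {M : Type*} [PseudoMetricSpace M]

theorem Metric.infDist_sq_add_le_infDist_sq {S : Set M} {u p : M} {k : ℝ} (hS : S.Nonempty)
    (hk : 0 ≤ k) (h : ∀ z ∈ S, dist z p ^ 2 + k ≤ dist u z ^ 2) :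
    infDist p S ^ 2 + k ≤ infDist u S ^ 2 := by
  have hsqrt : √(infDist p S ^ 2 + k) ≤ infDist u S := by
    refine (le_infDist hS).2 fun z hz => ?_
    have hpz : infDist p S ^ 2 ≤ dist z p ^ 2 := by
      rw [dist_comm]
      exact pow_le_pow_left₀ infDist_nonneg (infDist_le_dist_of_mem hz) 2
    calc √(infDist p S ^ 2 + k) ≤ √(dist u z ^ 2) := Real.sqrt_le_sqrt (by linarith [h z hz])
      _ = dist u z := Real.sqrt_sq dist_nonneg
  calc infDist p S ^ 2 + k = √(infDist p S ^ 2 + k) ^ 2 := (Real.sq_sqrt (by positivity)).symm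
    _ ≤ infDist u S ^ 2 := pow_le_pow_left₀ (Real.sqrt_nonneg _) hsqrt 2

theorem Metric.infDist_sq_add_mul_infDist_sq_le {S C : Set M} {P : M → M} {c : ℝ} {u : M}
    (hS : S.Nonempty) (hSC : S ⊆ C) (hc : 0 ≤ c) (hPdist : dist u (P u) = infDist u C)
    (hP : ∀ z ∈ C, dist z (P u) ^ 2 + c * dist u (P u) ^ 2 ≤ dist u z ^ 2) :
    infDist (P u) S ^ 2 + c * infDist u C ^ 2 ≤ infDist u S ^ 2 :=
  hPdist ▸ infDist_sq_add_le_infDist_sq hS (by positivity) fun z hz => hP z (hSC hz)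

theorem Metric.mul_max_infDist_sq_le_of_mem {A B : Set M} {P : M → M} {c : ℝ} {y : M}
    (hAB : (A ∩ B).Nonempty) (hc : 0 ≤ c) (hy : y ∈ A)
    (hPdist : dist y (P y) = infDist y B)
    (hP : ∀ z ∈ B, dist z (P y) ^ 2 + c * dist y (P y) ^ 2 ≤ dist y z ^ 2) :
    c * max (infDist y A) (infDist y B) ^ 2 ≤
      infDist y (A ∩ B) ^ 2 - infDist (P y) (A ∩ B) ^ 2 := by
  rw [infDist_zero_of_mem hy, max_eq_right infDist_nonneg]
  linarith [infDist_sq_add_mul_infDist_sq_le hAB inter_subset_right hc hPdist hP]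

end Projection

theorem alternating_projections_max_dist_tendsto_zero_general {M : Type*} [MetricSpace M]
    (A B : Set M) (hAB : (A ∩ B).Nonempty)
    (PA PB : M → M) (c : ℝ) (hc0 : 0 < c)
    (hPA_mem : ∀ x : M, PA x ∈ A) (hPB_mem : ∀ x : M, PB x ∈ B)
    (hPA_dist : ∀ x : M, dist x (PA x) = Metric.infDist x A)
    (hPB_dist : ∀ x : M, dist x (PB x) = Metric.infDist x B)
    (hPA : ∀ x : M, ∀ z ∈ A, dist z (PA x) ^ 2 + c * dist x (PA x) ^ 2 ≤ dist x z ^ 2)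
    (hPB : ∀ x : M, ∀ z ∈ B, dist z (PB x) ^ 2 + c * dist x (PB x) ^ 2 ≤ dist x z ^ 2)
    (x : ℕ → M)
    (hodd : ∀ n : ℕ, x (2 * n + 1) = PA (x (2 * n)))
    (heven : ∀ n : ℕ, x (2 * n + 2) = PB (x (2 * n + 1))) :
    Filter.Tendsto (fun n => max (Metric.infDist (x n) A) (Metric.infDist (x n) B))
      Filter.atTop (nhds 0) := by
  set g := fun n => max (infDist (x n) A) (infDist (x n) B)
  set f := fun n => infDist (x n) (A ∩ B) ^ 2
  have step : ∀ n, c * g (n + 1) ^ 2 ≤ f (n + 1) - f (n + 2) := by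
    intro n
    obtain ⟨k, rfl | rfl⟩ := Nat.even_or_odd' n
    · have hnext : x (2 * k + 1 + 1) = PB (x (2 * k + 1)) := heven k
      simp only [g, f, hnext]
      exact mul_max_infDist_sq_le_of_mem hAB hc0.le (hodd k ▸ hPA_mem _) (hPB_dist _) (hPB _)
    · have hnext : x (2 * k + 1 + 2) = PA (x (2 * k + 1 + 1)) := hodd (k + 1)
      have hcur : x (2 * k + 1 + 1) ∈ B := heven k ▸ hPB_mem _
      simp only [g, f, hnext, max_comm (infDist _ A), inter_comm A B]
      exact mul_max_infDist_sq_le_of_mem (inter_comm A B ▸ hAB) hc0.le hcur (hPA_dist _) (hPA _)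
  have hsq : Tendsto (fun n => g (n + 1) ^ 2) atTop (𝓝 0) := by
    simpa [hc0.ne'] using (tendsto_zero_of_le_sub_succ (fun n => by positivity)
      ⟨0, by rintro _ ⟨n, rfl⟩; positivity⟩ step).div_const c
  rw [← tendsto_add_atTop_iff_nat 1]
  simpa [g, Real.sqrt_sq (le_max_of_le_left infDist_nonneg)] using hsq.sqrt

theorem alternating_projections_max_dist_tendsto_zero {M : Type*} [MetricSpace M]
    (A B : Set M) (hA : A.Nonempty) (hB : B.Nonempty) (hAB : (A ∩ B).Nonempty)
    (hAclosed : IsClosed A) (hBclosed : IsClosed B)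
    (PA PB PAB : M → M) (c : ℝ) (hc0 : 0 < c) (hc1 : c < 1)
    (hPA_mem : ∀ x : M, PA x ∈ A) (hPB_mem : ∀ x : M, PB x ∈ B)
    (hPAB_mem : ∀ x : M, PAB x ∈ A ∩ B)
    (hPA_dist : ∀ x : M, dist x (PA x) = Metric.infDist x A)
    (hPB_dist : ∀ x : M, dist x (PB x) = Metric.infDist x B)
    (hPAB_dist : ∀ x : M, dist x (PAB x) = Metric.infDist x (A ∩ B))
    (hPA : ∀ x : M, ∀ z ∈ A, dist z (PA x) ^ 2 + c * dist x (PA x) ^ 2 ≤ dist x z ^ 2)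
    (hPB : ∀ x : M, ∀ z ∈ B, dist z (PB x) ^ 2 + c * dist x (PB x) ^ 2 ≤ dist x z ^ 2)
    (x : ℕ → M)
    (hodd : ∀ n : ℕ, x (2 * n + 1) = PA (x (2 * n)))
    (heven : ∀ n : ℕ, x (2 * n + 2) = PB (x (2 * n + 1))) :
    Filter.Tendsto (fun n => max (Metric.infDist (x n) A) (Metric.infDist (x n) B))
      Filter.atTop (nhds 0) :=
  alternating_projections_max_dist_tendsto_zero_general A B hAB PA PB c hc0 hPA_mem hPB_mem hPA_dist
    hPB_dist hPA hPB x hodd heven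
end

section
/- Let A, B be non-empty closed subsets of a complete metric space M with A ∩ B ≠ ∅, and suppose A and B are boundedly regular: for every bounded S ⊆ M and ε > 0 there is δ > 0 such that x ∈ S and max{d(x,A), d(x,B)} ≤ δ imply d(x, A∩B) ≤ ε. Let {x_n} be the alternating projection sequence with projections satisfying d(z, P_C(x))² + c·d(x, P_C(x))² ≤ d(x,z)² (c ∈ (0,1)) and with P_{A∩B} existing. Then {x_n} converges (strongly) to a point x ∈ A ∩ B. -/
open Metric Filter

theorem alternating_projections_convergence_of_boundedly_regular
    {M : Type*} [MetricSpace M] [CompleteSpace M]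
    (A B : Set M) (hA : A.Nonempty) (hB : B.Nonempty) (hAB : (A ∩ B).Nonempty)
    (hAclosed : IsClosed A) (hBclosed : IsClosed B)
    (hreg : ∀ S : Set M, Bornology.IsBounded S → ∀ ε : ℝ, 0 < ε → ∃ δ : ℝ, 0 < δ ∧
      ∀ x ∈ S, max (Metric.infDist x A) (Metric.infDist x B) ≤ δ →
        Metric.infDist x (A ∩ B) ≤ ε)
    (PA PB PAB : M → M) (c : ℝ) (hc0 : 0 < c) (hc1 : c < 1)
    (hPA_mem : ∀ x : M, PA x ∈ A) (hPB_mem : ∀ x : M, PB x ∈ B)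
    (hPAB_mem : ∀ x : M, PAB x ∈ A ∩ B)
    (hPA_dist : ∀ x : M, dist x (PA x) = Metric.infDist x A)
    (hPB_dist : ∀ x : M, dist x (PB x) = Metric.infDist x B)
    (hPAB_dist : ∀ x : M, dist x (PAB x) = Metric.infDist x (A ∩ B))
    (hPA : ∀ x : M, ∀ z ∈ A, dist z (PA x) ^ 2 + c * dist x (PA x) ^ 2 ≤ dist x z ^ 2)
    (hPB : ∀ x : M, ∀ z ∈ B, dist z (PB x) ^ 2 + c * dist x (PB x) ^ 2 ≤ dist x z ^ 2)
    (x : ℕ → M)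
    (hodd : ∀ n : ℕ, x (2 * n + 1) = PA (x (2 * n)))
    (heven : ∀ n : ℕ, x (2 * n + 2) = PB (x (2 * n + 1))) :
    ∃ p ∈ A ∩ B, Filter.Tendsto x Filter.atTop (nhds p) := by
  obtain ⟨z0, hz0⟩ := hAB
  -- key Fejér-type inequality
  have key : ∀ z ∈ A ∩ B, ∀ n : ℕ,
      dist (x (n+1)) z ^ 2 + c * dist (x n) (x (n+1)) ^ 2 ≤ dist (x n) z ^ 2 := by
    intro z hz n
    rcases Nat.even_or_odd n with he | ho
    · obtain ⟨k, rfl⟩ := he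
      have hx : x (k + k + 1) = PA (x (k + k)) := by
        have := hodd k; rwa [two_mul] at this
      rw [hx, dist_comm (PA (x (k + k))) z]
      exact hPA (x (k + k)) z hz.1
    · obtain ⟨k, rfl⟩ := ho
      have hx : x (2 * k + 1 + 1) = PB (x (2 * k + 1)) := by
        have := heven k
        rwa [show 2 * k + 2 = 2 * k + 1 + 1 by ring] at this
      rw [hx, dist_comm (PB (x (2 * k + 1))) z]
      exact hPB (x (2 * k + 1)) z hz.2
  -- Fejér monotonicity
  have hstep : ∀ z ∈ A ∩ B, ∀ n : ℕ, dist (x (n+1)) z ≤ dist (x n) z := by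
    intro z hz n
    have h := key z hz n
    nlinarith [dist_nonneg (x := x n) (y := x (n+1)), dist_nonneg (x := x (n+1)) (y := z),
      dist_nonneg (x := x n) (y := z), mul_nonneg hc0.le (sq_nonneg (dist (x n) (x (n+1))))]
  have hanti : ∀ z ∈ A ∩ B, Antitone fun n => dist (x n) z := by
    intro z hz
    exact antitone_nat_of_succ_le (hstep z hz)
  -- the sequence is bounded
  have hbound : ∀ n : ℕ, x n ∈ closedBall z0 (dist (x 0) z0) := by
    intro n
    simpa [mem_closedBall] using hanti z0 hz0 (Nat.zero_le n)
  -- consecutive distances tend to zero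
  have hsum : ∀ n : ℕ, ∑ k ∈ Finset.range n, c * dist (x k) (x (k+1)) ^ 2
      ≤ dist (x 0) z0 ^ 2 := by
    intro n
    have h : ∀ m : ℕ, ∑ k ∈ Finset.range m, c * dist (x k) (x (k+1)) ^ 2
        ≤ dist (x 0) z0 ^ 2 - dist (x m) z0 ^ 2 := by
      intro m
      induction m with
      | zero => simp
      | succ m ih =>
        rw [Finset.sum_range_succ]
        have := key z0 hz0 m
        linarith
    have := h n
    nlinarith [sq_nonneg (dist (x n) z0)]
  have hsummable : Summable (fun k => c * dist (x k) (x (k+1)) ^ 2) := by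
    apply summable_of_sum_range_le (fun k => mul_nonneg hc0.le (sq_nonneg _)) hsum
  have hd2 : Tendsto (fun n => dist (x n) (x (n+1)) ^ 2) atTop (nhds 0) := by
    have h0 := hsummable.tendsto_atTop_zero
    have := h0.const_mul (c⁻¹)
    simp only [← mul_assoc, inv_mul_cancel₀ hc0.ne', one_mul, mul_zero] at this
    exact this
  have hd : Tendsto (fun n => dist (x n) (x (n+1))) atTop (nhds 0) := by
    have h := hd2.sqrt
    simp only [Real.sqrt_zero] at h
    refine h.congr fun n => ?_
    exact Real.sqrt_sq dist_nonneg
  -- both distances to A and B go to zero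
  have hmax : ∀ n : ℕ, max (infDist (x (n+1)) A) (infDist (x (n+1)) B)
      ≤ dist (x (n+1)) (x (n+2)) := by
    intro n
    rcases Nat.even_or_odd (n+1) with he | ho
    · obtain ⟨k, hk⟩ := he
      obtain ⟨m, rfl⟩ : ∃ m, k = m + 1 := by
        cases k with
        | zero => omega
        | succ m => exact ⟨m, rfl⟩
      have h1 : n + 1 = 2 * m + 2 := by omega
      have hxB : x (n+1) ∈ B := by
        rw [h1, heven m]; exact hPB_mem _
      have hxA : x (n+2) ∈ A := by
        have : n + 2 = 2 * (m+1) + 1 := by omega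
        rw [this, hodd (m+1)]; exact hPA_mem _
      refine max_le ?_ ?_
      · exact le_trans (infDist_le_dist_of_mem hxA) le_rfl
      · rw [infDist_zero_of_mem hxB]; exact dist_nonneg
    · obtain ⟨k, hk⟩ := ho
      have hxA : x (n+1) ∈ A := by
        rw [hk, hodd k]; exact hPA_mem _
      have hxB : x (n+2) ∈ B := by
        have : n + 2 = 2 * k + 2 := by omega
        rw [this, heven k]; exact hPB_mem _
      refine max_le ?_ ?_
      · rw [infDist_zero_of_mem hxA]; exact dist_nonneg
      · exact infDist_le_dist_of_mem hxB
  -- Cauchy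
  have hcauchy : CauchySeq x := by
    rw [Metric.cauchySeq_iff]
    intro ε hε
    obtain ⟨δ, hδ0, hδ⟩ := hreg (closedBall z0 (dist (x 0) z0))
      isBounded_closedBall (ε/3) (by linarith)
    obtain ⟨N, hN⟩ := (Metric.tendsto_atTop.mp hd) δ hδ0
    have hdN : dist (x (N+1)) (x (N+2)) ≤ δ := by
      have := hN (N+1) (by omega)
      rw [Real.dist_eq, sub_zero, abs_of_nonneg dist_nonneg] at this
      linarith
    have hinf : infDist (x (N+1)) (A ∩ B) ≤ ε/3 :=
      hδ (x (N+1)) (hbound _) (le_trans (hmax N) hdN)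
    set p := PAB (x (N+1)) with hp
    have hpmem : p ∈ A ∩ B := hPAB_mem _
    have hdp : dist (x (N+1)) p ≤ ε/3 := by
      rw [hp, hPAB_dist]; exact hinf
    refine ⟨N+1, fun m hm n hn => ?_⟩
    have h1 : dist (x m) p ≤ ε/3 := le_trans (hanti p hpmem hm) hdp
    have h2 : dist (x n) p ≤ ε/3 := le_trans (hanti p hpmem hn) hdp
    calc dist (x m) (x n) ≤ dist (x m) p + dist p (x n) := dist_triangle _ _ _
      _ = dist (x m) p + dist (x n) p := by rw [dist_comm p]
      _ ≤ ε/3 + ε/3 := add_le_add h1 h2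
      _ < ε := by linarith
  obtain ⟨p, hp⟩ := cauchySeq_tendsto_of_complete hcauchy
  have hoddTendsto : Tendsto (fun k => x (2 * k + 1)) atTop (nhds p) :=
    hp.comp (tendsto_atTop_mono (fun k => by simp only [id_eq]; omega) tendsto_id)
  have hevenTendsto : Tendsto (fun k => x (2 * k + 2)) atTop (nhds p) :=
    hp.comp (tendsto_atTop_mono (fun k => by simp only [id_eq]; omega) tendsto_id)
  have hpA : p ∈ A :=
    hAclosed.mem_of_tendsto hoddTendsto
      (Eventually.of_forall fun k => by rw [hodd k]; exact hPA_mem _)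
  have hpB : p ∈ B :=
    hBclosed.mem_of_tendsto hevenTendsto
      (Eventually.of_forall fun k => by rw [heven k]; exact hPB_mem _)
  exact ⟨p, ⟨hpA, hpB⟩, hp⟩
end

section
/- Let (M,d) be a metric space, A, B ⊆ M non-empty closed sets with A ∩ B ≠ ∅, and {x_n} the alternating projection sequence with projections satisfying d(z, P_C(x))² + c·d(x, P_C(x))² ≤ d(x,z)² for z ∈ C and c ∈ (0,1), and with P_{A∩B} existing. If A (or B) is compact, then {x_n} converges to a point x ∈ A ∩ B. -/
open Filter Topology

theorem alternating_projections_convergence_of_compact {M : Type*} [MetricSpace M]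
    (A B : Set M) (hA : A.Nonempty) (hB : B.Nonempty) (hAB : (A ∩ B).Nonempty)
    (hAclosed : IsClosed A) (hBclosed : IsClosed B) (hAcompact : IsCompact A)
    (PA PB PAB : M → M) (c : ℝ) (hc0 : 0 < c) (hc1 : c < 1)
    (hPA_mem : ∀ x : M, PA x ∈ A) (hPB_mem : ∀ x : M, PB x ∈ B)
    (hPAB_mem : ∀ x : M, PAB x ∈ A ∩ B)
    (hPA_dist : ∀ x : M, dist x (PA x) = Metric.infDist x A)
    (hPB_dist : ∀ x : M, dist x (PB x) = Metric.infDist x B)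
    (hPAB_dist : ∀ x : M, dist x (PAB x) = Metric.infDist x (A ∩ B))
    (hPA : ∀ x : M, ∀ z ∈ A, dist z (PA x) ^ 2 + c * dist x (PA x) ^ 2 ≤ dist x z ^ 2)
    (hPB : ∀ x : M, ∀ z ∈ B, dist z (PB x) ^ 2 + c * dist x (PB x) ^ 2 ≤ dist x z ^ 2)
    (x : ℕ → M)
    (hodd : ∀ n : ℕ, x (2 * n + 1) = PA (x (2 * n)))
    (heven : ∀ n : ℕ, x (2 * n + 2) = PB (x (2 * n + 1))) :
    ∃ p ∈ A ∩ B, Filter.Tendsto x Filter.atTop (nhds p) := by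
  -- Key Fejér-type inequality
  have key : ∀ z ∈ A ∩ B, ∀ n : ℕ,
      c * dist (x n) (x (n + 1)) ^ 2 + dist (x (n + 1)) z ^ 2 ≤ dist (x n) z ^ 2 := by
    intro z hz n
    rcases Nat.even_or_odd n with ⟨m, hm⟩ | ⟨m, hm⟩
    · have hx1 : x (n + 1) = PA (x n) := by
        subst hm
        have h2 : m + m = 2 * m := by ring
        rw [h2]; exact hodd m
      have := hPA (x n) z hz.1
      rw [← hx1, dist_comm z (x (n + 1))] at this
      linarith
    · have hx1 : x (n + 1) = PB (x n) := by
        subst hm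
        exact heven m
      have := hPB (x n) z hz.2
      rw [← hx1, dist_comm z (x (n + 1))] at this
      linarith
  have step : ∀ z ∈ A ∩ B, ∀ n : ℕ, dist (x (n + 1)) z ≤ dist (x n) z := by
    intro z hz n
    have h := key z hz n
    have h2 : dist (x (n + 1)) z ^ 2 ≤ dist (x n) z ^ 2 := by
      nlinarith [dist_nonneg (x := x n) (y := x (n + 1))]
    exact (pow_le_pow_iff_left₀ dist_nonneg dist_nonneg two_ne_zero).mp h2
  obtain ⟨z0, hz0⟩ := hAB
  set a : ℕ → ℝ := fun n => dist (x n) z0 ^ 2 with ha_def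
  have ha_anti : Antitone a := by
    apply antitone_nat_of_succ_le
    intro n
    exact pow_le_pow_left₀ dist_nonneg (step z0 hz0 n) 2
  have ha_bdd : BddBelow (Set.range a) := ⟨0, by rintro _ ⟨n, rfl⟩; positivity⟩
  have ha_lim : Tendsto a atTop (𝓝 (⨅ n, a n)) := tendsto_atTop_ciInf ha_anti ha_bdd
  have hdiff : Tendsto (fun n => a n - a (n + 1)) atTop (𝓝 0) := by
    have := ha_lim.sub (ha_lim.comp (tendsto_add_atTop_nat 1))
    simpa using this
  -- successive distances tend to zero
  set s : ℕ → ℝ := fun n => dist (x n) (x (n + 1)) with hs_def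
  have hs_sq : Tendsto (fun n => s n ^ 2) atTop (𝓝 0) := by
    have hub : ∀ n, s n ^ 2 ≤ (a n - a (n + 1)) / c := by
      intro n
      have h := key z0 hz0 n
      rw [le_div_iff₀ hc0]
      simp only [ha_def, hs_def]
      nlinarith
    have hlb : ∀ n, (0 : ℝ) ≤ s n ^ 2 := fun n => by positivity
    have h2 : Tendsto (fun n => (a n - a (n + 1)) / c) atTop (𝓝 0) := by
      have := hdiff.div_const c
      simpa using this
    exact tendsto_of_tendsto_of_tendsto_of_le_of_le tendsto_const_nhds h2 hlb hub
  have hs_lim : Tendsto s atTop (𝓝 0) := by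
    have : Tendsto (fun n => Real.sqrt (s n ^ 2)) atTop (𝓝 (Real.sqrt 0)) :=
      (Real.continuous_sqrt.tendsto 0).comp hs_sq
    simpa [Real.sqrt_sq (dist_nonneg : (0:ℝ) ≤ _), Real.sqrt_zero, hs_def,
      Real.sqrt_sq dist_nonneg] using this
  -- compactness: subsequence of odd terms converges
  have humem : ∀ k : ℕ, x (2 * k + 1) ∈ A := by
    intro k; rw [hodd k]; exact hPA_mem _
  obtain ⟨p, hpA, φ, hφ, hφlim⟩ := hAcompact.tendsto_subseq humem
  have hφ_top : Tendsto (fun k => 2 * φ k + 1) atTop atTop := by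
    apply tendsto_atTop_mono (fun k => ?_) hφ.tendsto_atTop
    have := hφ.id_le k
    omega
  -- even successors converge to p too
  have heven_lim : Tendsto (fun k => x (2 * φ k + 2)) atTop (𝓝 p) := by
    rw [tendsto_iff_dist_tendsto_zero]
    have hub : ∀ k, dist (x (2 * φ k + 2)) p ≤ s (2 * φ k + 1) + dist (x (2 * φ k + 1)) p := by
      intro k
      calc dist (x (2 * φ k + 2)) p ≤ dist (x (2 * φ k + 2)) (x (2 * φ k + 1))
            + dist (x (2 * φ k + 1)) p := dist_triangle _ _ _
        _ = s (2 * φ k + 1) + dist (x (2 * φ k + 1)) p := by rw [dist_comm]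
    have h1 : Tendsto (fun k => s (2 * φ k + 1)) atTop (𝓝 0) := hs_lim.comp hφ_top
    have h2 : Tendsto (fun k => dist (x (2 * φ k + 1)) p) atTop (𝓝 0) := by
      have := hφlim.dist (tendsto_const_nhds (x := p) (f := atTop))
      simpa [Function.comp] using this
    have h3 := h1.add h2
    rw [add_zero] at h3
    exact tendsto_of_tendsto_of_tendsto_of_le_of_le tendsto_const_nhds h3
      (fun k => dist_nonneg) hub
  have hpB : p ∈ B := by
    apply hBclosed.mem_of_tendsto heven_lim
    filter_upwards with k
    rw [heven (φ k)]
    exact hPB_mem _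
  refine ⟨p, ⟨hpA, hpB⟩, ?_⟩
  -- Fejér monotone w.r.t. p; a subsequence of distances tends to 0, so all do
  set b : ℕ → ℝ := fun n => dist (x n) p with hb_def
  have hb_anti : Antitone b := antitone_nat_of_succ_le (fun n => step p ⟨hpA, hpB⟩ n)
  have hb_bdd : BddBelow (Set.range b) := ⟨0, by rintro _ ⟨n, rfl⟩; exact dist_nonneg⟩
  have hb_lim : Tendsto b atTop (𝓝 (⨅ n, b n)) := tendsto_atTop_ciInf hb_anti hb_bdd
  have hsub0 : Tendsto (fun k => b (2 * φ k + 1)) atTop (𝓝 0) := by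
    have := hφlim.dist (tendsto_const_nhds (x := p) (f := atTop))
    simpa [Function.comp, hb_def] using this
  have hsubl : Tendsto (fun k => b (2 * φ k + 1)) atTop (𝓝 (⨅ n, b n)) :=
    hb_lim.comp hφ_top
  have hinf0 : (⨅ n, b n) = 0 := tendsto_nhds_unique hsubl hsub0
  rw [tendsto_iff_dist_tendsto_zero]
  rw [hinf0] at hb_lim
  exact hb_lim
end
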